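/- Let M ∈ SL(n, ℚ_p) and let M = N·A·K be any Iwasawa decomposition (N unit upper triangular, A diagonal with det A = 1, K ∈ SL(n, ℤ_p)). Parameterize A by dilatons y₁,…,y_{n−1} via A_{ii} = y_i / y_{i−1} with y₀ = y_n = 1. Then for each k ∈ {1,…,n−1}, |y_{n−k}|_p = ( max over all k-element subsets σ(1) < … < σ(k) of {1,…,n} of |M(n−k+1, …, n | σ(1), …, σ(k))|_p )^{−1}, i.e., the p-adic norm of y_{n−k} is the inverse of the maximal p-adic norm of an anti-leading minor of order k of M. -/

import Mathlib

/-!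
Rows `n-k+1, …, n` of the unit upper triangular `N` vanish outside the columns `n-k+1, …, n`,
so an anti-leading minor of `M = N·A·K` is the anti-leading minor of `A·K` with the same columns,
that is `A_{n-k+1} ⋯ A_n = y_n / y_{n-k} = y_{n-k}⁻¹` times the corresponding minor of `K`.
All minors of `K ∈ SL(n, ℤ_p)` lie in `ℤ_p`, and on any fixed set of `k` rows one of them is a
unit: modulo `p` these rows stay linearly independent, hence have a nonzero `k × k` minor.
-/

open Finset Matrix

theorem Finset.eq_prod_range_div₀ {G₀ : Type*} [CommGroupWithZero G₀] (f : ℕ → G₀) (n : ℕ)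
    (hf : ∀ i < n, f i ≠ 0) : f n = f 0 * ∏ i ∈ range n, f (i + 1) / f i := by
  induction n with
  | zero => simp
  | succ n ih =>
    rw [prod_range_succ, ← mul_assoc, ← ih fun i hi => hf i (by omega),
      mul_div_cancel₀ _ (hf n n.lt_succ_self)]

theorem Matrix.exists_strictMono_det_submatrix_ne_zero {F : Type*} [Field F] {k n : ℕ}
    (R : Matrix (Fin k) (Fin n) F) (hR : LinearIndependent F R.row) :
    ∃ σ : Fin k → Fin n, StrictMono σ ∧ (R.submatrix id σ).det ≠ 0 := by
  classical
  obtain ⟨κ, a, ha, hspan, hli⟩ := exists_linearIndependent' F R.col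
  have : Fintype κ := Fintype.ofInjective a ha
  have hcard : (univ.image a).card = k := by
    rw [card_image_of_injective _ ha, card_univ, linearIndependent_iff_card_eq_finrank_span.mp hli,
      Set.finrank, hspan, ← rank_eq_finrank_span_cols, rank_eq_finrank_span_row,
      finrank_span_eq_card hR, Fintype.card_fin]
  set σ := (univ.image a).orderEmbOfFin hcard
  choose π hπ using fun i => mem_image.mp ((univ.image a).orderEmbOfFin_mem hcard i)
  have hσ : ⇑σ = a ∘ π := funext fun i => (hπ i).2.symm
  have hcols : LinearIndependent F (R.submatrix id σ).col := by
    have hπinj : Function.Injective π := fun i j h => σ.injective (by simp [hσ, h])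
    rw [hσ]
    exact hli.comp π hπinj
  exact ⟨σ, σ.strictMono,
    ((isUnit_iff_isUnit_det _).mp (linearIndependent_cols_iff_isUnit.mp hcols)).ne_zero⟩

theorem Matrix.exists_strictMono_isUnit_det_submatrix {R : Type*} [CommRing R] [IsLocalRing R]
    {k n : ℕ} (K : Matrix (Fin n) (Fin n) R) (hK : IsUnit K.det) {r : Fin k → Fin n}
    (hr : Function.Injective r) :
    ∃ σ : Fin k → Fin n, StrictMono σ ∧ IsUnit (K.submatrix r σ).det := by
  let f := IsLocalRing.residue R
  have hunit : IsUnit (f.mapMatrix K) := by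
    rw [isUnit_iff_isUnit_det, ← RingHom.map_det]
    exact hK.map f
  obtain ⟨σ, hσ, hdet⟩ := exists_strictMono_det_submatrix_ne_zero ((f.mapMatrix K).submatrix r id)
    ((linearIndependent_rows_iff_isUnit.mpr hunit).comp r hr)
  refine ⟨σ, hσ, (IsLocalRing.residue_ne_zero_iff_isUnit _).mp ?_⟩
  rwa [RingHom.map_det, RingHom.mapMatrix_apply, ← submatrix_map]

theorem PadicInt.norm_det_mapMatrix_coe {p : ℕ} [Fact p.Prime] {ι : Type*} [Fintype ι]
    [DecidableEq ι] (B : Matrix ι ι ℤ_[p]) : ‖(Coe.ringHom.mapMatrix B).det‖ = ‖B.det‖ := by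
  rw [PadicInt.norm_def, ← RingHom.map_det]
  rfl

theorem Padic.sup_nnnorm_det_submatrix_eq_one {p : ℕ} [Fact p.Prime] {k n : ℕ}
    (K : Matrix (Fin n) (Fin n) ℚ_[p]) (hK : ∀ i j, ‖K i j‖ ≤ 1) (hKdet : ‖K.det‖ = 1)
    {r : Fin k → Fin n} (hr : Function.Injective r) :
    ((univ.filter fun σ : Fin k → Fin n => ∀ a b : Fin k, a < b → σ a < σ b).sup fun σ =>
      ‖(K.submatrix r σ).det‖₊) = 1 := by
  obtain ⟨K, rfl⟩ : ∃ K' : Matrix (Fin n) (Fin n) ℤ_[p], PadicInt.Coe.ringHom.mapMatrix K' = K :=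
    ⟨of fun i j => ⟨K i j, hK i j⟩, rfl⟩
  have hminor (σ : Fin k → Fin n) :
      ‖((PadicInt.Coe.ringHom.mapMatrix K).submatrix r σ).det‖ = ‖(K.submatrix r σ).det‖ :=
    PadicInt.norm_det_mapMatrix_coe (K.submatrix r σ)
  rw [PadicInt.norm_det_mapMatrix_coe, ← PadicInt.isUnit_iff] at hKdet
  obtain ⟨σ, hσ, hunit⟩ := exists_strictMono_isUnit_det_submatrix K hKdet hr
  refine le_antisymm (Finset.sup_le fun τ _ => ?_)
    (le_sup_of_le (mem_filter.mpr ⟨mem_univ σ, fun a b h => hσ h⟩) ?_)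
  · rw [← NNReal.coe_le_one, coe_nnnorm, hminor]
    exact PadicInt.norm_le_one _
  · rw [← NNReal.coe_le_coe, coe_nnnorm, hminor, PadicInt.isUnit_iff.mp hunit, NNReal.coe_one]

theorem Matrix.det_submatrix_lastRows_unitriangular_mul {R m : Type*} [CommRing R] {n k : ℕ}
    (N : Matrix (Fin n) (Fin n) R) (B : Matrix (Fin n) m R) (hN : N.IsUpperTriangular)
    (hNd : ∀ i, N i i = 1) {r : Fin k → Fin n} (hr : ∀ i, (r i : ℕ) = n - k + i)
    (σ : Fin k → m) :
    ((N * B).submatrix r σ).det = (B.submatrix r σ).det := by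
  have hrmono : StrictMono r := fun i j h => by rw [Fin.lt_def, hr, hr]; omega
  have hsplit : (N * B).submatrix r σ = N.submatrix r r * B.submatrix r σ := by
    ext i j
    refine (Fintype.sum_of_injective r hrmono.injective _ _ (fun l hl => ?_) fun _ => rfl).symm
    have hl : l < r i := by
      by_contra! h
      have := hr i
      exact hl ⟨⟨l - (n - k), by omega⟩, Fin.ext (by simp only [hr]; omega)⟩
    exact mul_eq_zero_of_left (hN hl) _
  rw [hsplit, det_mul, det_of_isUpperTriangular (M := N.submatrix r r) fun i j h => hN (hrmono h),
    Fintype.prod_eq_one (fun i => N.submatrix r r i i) fun i => hNd (r i), one_mul]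

theorem Matrix.det_submatrix_diagonal_mul {R n m ι : Type*} [CommRing R] [Fintype n]
    [DecidableEq n] [Fintype ι] [DecidableEq ι] (d : n → R) (B : Matrix n m R) (r : ι → n)
    (σ : ι → m) :
    ((diagonal d * B).submatrix r σ).det = (∏ i, d (r i)) * (B.submatrix r σ).det := by
  have h : (diagonal d * B).submatrix r σ = of fun i j => d (r i) * B.submatrix r σ i j := by
    ext i j
    simp
  rw [h, det_mul_column]

open Finset in
theorem stmt_9 (p : ℕ) [Fact p.Prime] (n : ℕ)
    (M N A K : Matrix (Fin n) (Fin n) ℚ_[p])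
    (hdec : M = N * A * K)
    (hNd : ∀ i, N i i = 1) (hN0 : ∀ i j : Fin n, j < i → N i j = 0)
    (hA : ∀ i j : Fin n, i ≠ j → A i j = 0) (hAdet : A.det = 1)
    (hK : ∀ i j, ‖K i j‖ ≤ 1) (hKdet : K.det = 1)
    (y : ℕ → ℚ_[p]) (hyn : y n = 1)
    (hAy : ∀ i : Fin n, A i i = y (i.1 + 1) / y i.1) :
    ∀ k : ℕ, (hk1 : 1 ≤ k) → (hk2 : k ≤ n - 1) →
      ‖y (n - k)‖₊ =
        ((Finset.univ.filter fun σ : Fin k → Fin n =>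
            ∀ a b : Fin k, a < b → σ a < σ b).sup fun σ =>
          ‖(M.submatrix
              (fun i : Fin k => (⟨n - k + i.1, by have := i.2; omega⟩ : Fin n))
              σ).det‖₊)⁻¹ := by
  intro k hk1 hk2
  set r : Fin k → Fin n := fun i => ⟨n - k + i.1, by omega⟩
  obtain ⟨d, rfl⟩ : ∃ d, A = diagonal d := ⟨_, ((isDiag_iff_diagonal_diag A).mp hA).symm⟩
  have hd : ∀ i, d i ≠ 0 := fun i =>
    prod_ne_zero_iff.mp (by rw [← det_diagonal, hAdet]; exact one_ne_zero) i (mem_univ i)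
  have hy : ∀ j < n, y j ≠ 0 := fun j hj h0 => hd ⟨j, hj⟩ (by simpa [h0] using hAy ⟨j, hj⟩)
  have hprod : ∏ i, d (r i) = (y (n - k))⁻¹ := by
    refine eq_inv_of_mul_eq_one_right ?_
    calc y (n - k) * ∏ i, d (r i)
        = y (n - k) * ∏ i ∈ range k, y (n - k + i + 1) / y (n - k + i) := by
          rw [← Fin.prod_univ_eq_prod_range]
          congr! 2 with i
          simpa using hAy (r i)
      _ = y (n - k + k) :=
          (eq_prod_range_div₀ (fun i => y (n - k + i)) k fun i hi => hy _ (by omega)).symm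
      _ = 1 := by rw [Nat.sub_add_cancel (by omega), hyn]
  have hminor (σ : Fin k → Fin n) :
      (M.submatrix r σ).det = (y (n - k))⁻¹ * (K.submatrix r σ).det := by
    rw [hdec, mul_assoc, det_submatrix_lastRows_unitriangular_mul _ _ (fun i j h => hN0 i j h) hNd
      (fun i => rfl), det_submatrix_diagonal_mul, hprod]
  simp_rw [hminor, nnnorm_mul, ← NNReal.mul_finset_sup]
  rw [Padic.sup_nnnorm_det_submatrix_eq_one K hK (by rw [hKdet, norm_one])
    fun i j h => Fin.ext (by simpa [r] using h), mul_one, nnnorm_inv, inv_inv]
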